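/- The function F(x) = 1/(4x) − (3/(4(6x)^{3/2}))·(1−6x)·log((1+√(6x))/(1−√(6x))) satisfies, as x → (1/6)⁻: F(x) = 3/2 + (3/4)(1−6x)log(1−6x) + (3/2)(1−log 2)(1−6x) + o(1−6x). -/
import Mathlib


open Filter Asymptotics

noncomputable def Fstar (x : ℝ) : ℝ :=
  1 / (4 * x) - (3 / (4 * (6 * x) ^ ((3:ℝ)/2))) * (1 - 6 * x) *
    Real.log ((1 + Real.sqrt (6 * x)) / (1 - Real.sqrt (6 * x)))

noncomputable def gfun (u : ℝ) : ℝ :=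
  ((3/2)/u^2 - (3/4)*(1/u^3+1)*Real.log (1+u) - (3/2)*(1-Real.log 2))
  + (3/4)*((1+u+u^2)/u^3) * (Real.log (1-u) * (1-u))

lemma tlogt : Tendsto (fun t : ℝ => Real.log t * t) (nhdsWithin 0 (Set.Ioi 0)) (nhds 0) := by
  simpa using tendsto_log_mul_rpow_nhdsGT_zero one_pos

lemma oneSub_tendsto : Tendsto (fun u : ℝ => 1 - u)
    (nhdsWithin 1 (Set.Iio 1)) (nhdsWithin 0 (Set.Ioi 0)) := by
  apply tendsto_nhdsWithin_of_tendsto_nhds_of_eventually_within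
  · have : Tendsto (fun u : ℝ => 1 - u) (nhds 1) (nhds (1 - 1)) :=
      (tendsto_const_nhds.sub tendsto_id)
    simpa using this.mono_left nhdsWithin_le_nhds
  · filter_upwards [self_mem_nhdsWithin] with u hu
    simp only [Set.mem_Iio] at hu
    simpa using hu

lemma glim : Tendsto gfun (nhdsWithin 1 (Set.Iio 1)) (nhds 0) := by
  have c1 : ContinuousAt (fun u:ℝ =>
      (3/2)/u^2 - (3/4)*(1/u^3+1)*Real.log (1+u) - (3/2)*(1-Real.log 2)) 1 := by
    have hlog : ContinuousAt Real.log (1 + 1) := Real.continuousAt_log (by norm_num)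
    fun_prop (disch := norm_num)
  have c2 : ContinuousAt (fun u:ℝ => (3/4)*((1+u+u^2)/u^3)) 1 := by
    fun_prop (disch := norm_num)
  have h1 : Tendsto (fun u:ℝ =>
      (3/2)/u^2 - (3/4)*(1/u^3+1)*Real.log (1+u) - (3/2)*(1-Real.log 2))
      (nhdsWithin 1 (Set.Iio 1)) (nhds 0) := by
    have := c1.tendsto.mono_left (nhdsWithin_le_nhds (s := Set.Iio 1))
    convert this using 2
    norm_num
    ring
  have h2 : Tendsto (fun u:ℝ => (3/4)*((1+u+u^2)/u^3) * (Real.log (1-u) * (1-u)))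
      (nhdsWithin 1 (Set.Iio 1)) (nhds 0) := by
    have := (c2.tendsto.mono_left (nhdsWithin_le_nhds (s := Set.Iio 1))).mul
      (tlogt.comp oneSub_tendsto)
    simpa using this
  have h := h1.add h2
  simp only [add_zero] at h
  exact h

lemma sqrt_tendsto : Tendsto (fun x : ℝ => Real.sqrt (6 * x))
    (nhdsWithin (1/6) (Set.Iio (1/6))) (nhdsWithin 1 (Set.Iio 1)) := by
  apply tendsto_nhdsWithin_of_tendsto_nhds_of_eventually_within
  · have : ContinuousAt (fun x : ℝ => Real.sqrt (6 * x)) (1/6) := by fun_prop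
    have h := this.tendsto.mono_left (nhdsWithin_le_nhds (s := Set.Iio (1/6)))
    norm_num at h
    convert h using 2
    norm_num [Real.sqrt_one]
  · filter_upwards [self_mem_nhdsWithin] with x hx
    simp only [Set.mem_Iio] at hx ⊢
    have h6 : 6 * x < 1 := by linarith
    calc Real.sqrt (6 * x) < Real.sqrt 1 := by
          rcases le_or_gt (6 * x) 0 with h | h
          · rw [Real.sqrt_eq_zero'.mpr (by linarith)]
            rw [Real.sqrt_one]; norm_num
          · exact Real.sqrt_lt_sqrt h.le h6
      _ = 1 := Real.sqrt_one

theorem stmt10 :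
    (fun x => Fstar x - (3/2 + (3/4) * (1 - 6 * x) * Real.log (1 - 6 * x) +
        (3/2) * (1 - Real.log 2) * (1 - 6 * x)))
      =o[nhdsWithin (1/6) (Set.Iio (1/6))] fun x => 1 - 6 * x := by
  have hne : ∀ᶠ x in nhdsWithin (1/6 : ℝ) (Set.Iio (1/6)), (1 - 6 * x) ≠ 0 := by
    filter_upwards [self_mem_nhdsWithin] with x hx
    simp only [Set.mem_Iio] at hx
    nlinarith
  rw [isLittleO_iff_tendsto']
  swap
  · filter_upwards [hne] with x hx h; exact absurd h hx
  -- key eventual equality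
  have hmem : Set.Ioo (0:ℝ) (1/6) ∈ nhdsWithin (1/6 : ℝ) (Set.Iio (1/6)) := by
    rw [show Set.Ioo (0:ℝ) (1/6) = Set.Ioi 0 ∩ Set.Iio (1/6) from rfl]
    exact Filter.inter_mem (nhdsWithin_le_nhds (Ioi_mem_nhds (by norm_num)))
      self_mem_nhdsWithin
  have heq : ∀ᶠ x in nhdsWithin (1/6 : ℝ) (Set.Iio (1/6)),
      gfun (Real.sqrt (6 * x)) =
      (Fstar x - (3/2 + (3/4) * (1 - 6 * x) * Real.log (1 - 6 * x) +
        (3/2) * (1 - Real.log 2) * (1 - 6 * x))) / (1 - 6 * x) := by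
    filter_upwards [hmem] with x hx
    obtain ⟨hx0, hx1⟩ := hx
    set u := Real.sqrt (6 * x) with hu
    have hupos : 0 < u := Real.sqrt_pos.mpr (by linarith)
    have hu2 : u ^ 2 = 6 * x := Real.sq_sqrt (by linarith)
    have hult : u < 1 := by
      have h6 : 6 * x < 1 := by linarith
      calc u < Real.sqrt 1 := Real.sqrt_lt_sqrt (by linarith) h6
        _ = 1 := Real.sqrt_one
    have hrpow : (6 * x) ^ ((3:ℝ)/2) = u ^ 3 := by
      rw [← hu2, ← Real.rpow_natCast u 2, ← Real.rpow_mul hupos.le,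
        show ((2:ℕ):ℝ) * ((3:ℝ)/2) = ((3:ℕ):ℝ) by norm_num, Real.rpow_natCast]
    have hL : Real.log ((1 + u) / (1 - u)) = Real.log (1 + u) - Real.log (1 - u) :=
      Real.log_div (by linarith) (by linarith)
    have hlogeps : Real.log (1 - 6 * x) = Real.log (1 + u) + Real.log (1 - u) := by
      rw [show (1 : ℝ) - 6 * x = (1 + u) * (1 - u) by rw [← hu2]; ring]
      exact Real.log_mul (by linarith) (by linarith)
    have hxu : x = u ^ 2 / 6 := by rw [hu2]; ring
    rw [Fstar, hrpow, hL, hlogeps, gfun, hxu]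
    have hune : u ≠ 0 := hupos.ne'
    have heps : 1 - u ^ 2 ≠ 0 := by nlinarith
    field_simp
    ring
  exact Tendsto.congr' heq (glim.comp sqrt_tendsto)
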